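/- For a partition λ and a box s with s+(1,1) ∈ R⁺_λ (i.e., s is a removable box of λ), one has Σ_{q ∈ A_λ} ℏ·τ_λ^q / ([s-q]·[s-q+(1,1)]) = τ_{λ-s}^s, where ℏ = -ε₁ε₂, τ are Kerov's co-transition measures, and A_λ is the set of addable boxes of λ. -/

import Mathlib

noncomputable section

/-- The coefficient field `ℂ(ε₁,ε₂)`, realized as the fraction field of a polynomial
ring in two (transcendental) variables. -/
abbrev Kf : Type := FractionRing (MvPolynomial (Fin 2) ℚ)

/-- The equivariant parameter `ε₁`. -/
def eps1 : Kf := algebraMap (MvPolynomial (Fin 2) ℚ) Kf (MvPolynomial.X 0)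

/-- The equivariant parameter `ε₂`. -/
def eps2 : Kf := algebraMap (MvPolynomial (Fin 2) ℚ) Kf (MvPolynomial.X 1)

/-- The content `[b] = b₁ε₁ + b₂ε₂` of a box `b`. -/
def content (b : ℕ × ℕ) : Kf := (b.1 : Kf) * eps1 + (b.2 : Kf) * eps2

/-- The set `A_Y` of addable boxes (inner corners) of a Young diagram `Y`. -/
def addables (Y : YoungDiagram) : Finset (ℕ × ℕ) :=
  ((Finset.range (Y.cells.card + 1)) ×ˢ (Finset.range (Y.cells.card + 1))).filter
    (fun c => c ∉ Y.cells ∧ (c.1 = 0 ∨ (c.1 - 1, c.2) ∈ Y.cells) ∧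
      (c.2 = 0 ∨ (c.1, c.2 - 1) ∈ Y.cells))

/-- The set `R_Y` of removable boxes of a Young diagram `Y`. -/
def removables (Y : YoungDiagram) : Finset (ℕ × ℕ) :=
  Y.cells.filter fun c => (c.1 + 1, c.2) ∉ Y.cells ∧ (c.1, c.2 + 1) ∉ Y.cells

/-- The set `R⁺_Y = {t + (1,1) : t ∈ R_Y}` of outer corners of `Y`. -/
def outers (Y : YoungDiagram) : Finset (ℕ × ℕ) :=
  (removables Y).image fun c => (c.1 + 1, c.2 + 1)

/-- Kerov's co-transition measure
`τ_Y^a = ∏_{t∈R⁺_Y}[a-t] / ∏_{a'∈A_Y, a'≠a}[a-a']` at an addable box `a`. -/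
def tau (Y : YoungDiagram) (a : ℕ × ℕ) : Kf :=
  (∏ t ∈ outers Y, (content a - content t)) /
    ∏ a' ∈ (addables Y).erase a, (content a - content a')

/-- The quantum parameter `ℏ = -ε₁ε₂`. -/
def hbar : Kf := -eps1 * eps2

/-!
Since `|A_λ| = |R⁺_λ| + 1`, Lagrange interpolation of `∏_{t ∈ R⁺_λ} (z - [t])` at the nodes
`[a]`, `a ∈ A_λ`, gives the partial fraction expansion
`∑_{q ∈ A_λ} τ_λ^q / (z - [q]) = ∏_{t ∈ R⁺_λ} (z - [t]) / ∏_{a ∈ A_λ} (z - [a])`.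
Splitting `1 / ([s-q] [s-q+(1,1)])` into partial fractions, the left-hand side becomes
`ℏ / (ε₁+ε₂)` times the difference of this function at `[s]` and at `[s+(1,1)]`, and the second
value vanishes because `s+(1,1)` is an outer corner. Removing `s` from `λ` deletes the outer
corner `s+(1,1)` and the addable boxes `b = s+(1,0), s+(0,1)`, and turns each of these `b` that
was not addable into an outer corner of `λ-s`. So each `b` contributes its factor
`[s-b] ∈ {-ε₁, -ε₂}` to exactly one side, and together they account for `ε₁ε₂ = -ℏ`.
-/

open Finset

lemma content_injective : Function.Injective content := by
  open MvPolynomial in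
  intro a b h
  have hp : (C (a.1 : ℚ) * X 0 + C (a.2 : ℚ) * X 1 : MvPolynomial (Fin 2) ℚ) =
      C (b.1 : ℚ) * X 0 + C (b.2 : ℚ) * X 1 :=
    IsFractionRing.injective _ Kf (by simpa [content, eps1, eps2] using h)
  have h0 := congrArg (coeff (Finsupp.single 0 1)) hp
  have h1 := congrArg (coeff (Finsupp.single 1 1)) hp
  simp only [coeff_add, coeff_C_mul, coeff_X, Finsupp.single_eq_single_iff] at h0 h1
  exact Prod.ext (by simpa using h0) (by simpa using h1)

lemma content_add_one (p : ℕ × ℕ) : content (p.1 + 1, p.2 + 1) = content p + eps1 + eps2 := by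
  simp only [content]
  push_cast
  ring

lemma eps1_add_eps2_ne_zero : eps1 + eps2 ≠ 0 := by
  intro h
  have := content_injective (a₁ := (1, 1)) (a₂ := (0, 0)) (by simpa [content] using h)
  simp at this

lemma fst_lt_card_cells {Y : YoungDiagram} {c : ℕ × ℕ} (h : c ∈ Y) : c.1 < #Y.cells :=
  calc c.1 < Y.colLen c.2 := YoungDiagram.mem_iff_lt_colLen.mp h
    _ = #(Y.col c.2) := Y.colLen_eq_card
    _ ≤ #Y.cells := card_filter_le _ _

lemma snd_lt_card_cells {Y : YoungDiagram} {c : ℕ × ℕ} (h : c ∈ Y) : c.2 < #Y.cells :=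
  calc c.2 < Y.rowLen c.1 := YoungDiagram.mem_iff_lt_rowLen.mp h
    _ = #(Y.row c.1) := Y.rowLen_eq_card
    _ ≤ #Y.cells := card_filter_le _ _

lemma mem_addables_iff {Y : YoungDiagram} {a : ℕ × ℕ} :
    a ∈ addables Y ↔ a ∉ Y ∧ (a.1 = 0 ∨ (a.1 - 1, a.2) ∈ Y) ∧ (a.2 = 0 ∨ (a.1, a.2 - 1) ∈ Y) := by
  simp only [addables, mem_filter, mem_product, mem_range, YoungDiagram.mem_cells,
    and_iff_right_iff_imp]
  rintro ⟨-, h1, h2⟩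
  constructor
  · rcases h1 with h1 | h1
    · omega
    · have := fst_lt_card_cells h1; omega
  · rcases h2 with h2 | h2
    · omega
    · have := snd_lt_card_cells h2; omega

lemma mem_removables_iff {Y : YoungDiagram} {r : ℕ × ℕ} :
    r ∈ removables Y ↔ r ∈ Y ∧ (r.1 + 1, r.2) ∉ Y ∧ (r.1, r.2 + 1) ∉ Y := by
  simp [removables]

lemma mem_outers_iff {Y : YoungDiagram} {t : ℕ × ℕ} :
    t ∈ outers Y ↔ 0 < t.1 ∧ 0 < t.2 ∧
      (t.1 - 1, t.2 - 1) ∈ Y ∧ (t.1, t.2 - 1) ∉ Y ∧ (t.1 - 1, t.2) ∉ Y := by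
  obtain ⟨i, j⟩ := t
  simp only [outers, mem_image, mem_removables_iff, Prod.exists, Prod.mk.injEq]
  constructor
  · rintro ⟨a, b, ⟨hab, h1, h2⟩, rfl, rfl⟩
    simpa using ⟨hab, h1, h2⟩
  · rintro ⟨hi, hj, h⟩
    exact ⟨i - 1, j - 1, by grind⟩

lemma notMem_addables_of_mem {Y : YoungDiagram} {c : ℕ × ℕ} (h : c ∈ Y) : c ∉ addables Y :=
  fun hc => (mem_addables_iff.mp hc).1 h

lemma disjoint_outers_addables (Y : YoungDiagram) : Disjoint (outers Y) (addables Y) := by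
  rw [disjoint_left]
  intro t ht hta
  obtain ⟨ht₁, -, -, -, hup⟩ := mem_outers_iff.mp ht
  obtain ⟨-, h | h, -⟩ := mem_addables_iff.mp hta
  exacts [ht₁.ne' h, hup h]

lemma card_outers_lt_card_addables (Y : YoungDiagram) : #(outers Y) < #(addables Y) := by
  have h0 : (0, Y.rowLen 0) ∈ addables Y := by
    refine mem_addables_iff.mpr ⟨?_, Or.inl rfl, ?_⟩ <;>
      simp only [YoungDiagram.mem_iff_lt_rowLen] <;> omega
  -- an outer corner in row `i` is sent to the addable box ending row `i`
  have hmaps : Set.MapsTo (fun t : ℕ × ℕ => (t.1, Y.rowLen t.1)) (outers Y)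
      ((addables Y).erase (0, Y.rowLen 0)) := by
    intro t ht
    rw [mem_coe, mem_outers_iff] at ht
    rw [mem_coe, mem_erase, mem_addables_iff]
    simp only [YoungDiagram.mem_iff_lt_rowLen, ne_eq, Prod.mk.injEq] at ht ⊢
    omega
  have hinj : Set.InjOn (fun t : ℕ × ℕ => (t.1, Y.rowLen t.1)) (outers Y) := by
    rintro ⟨i, j⟩ ht ⟨i', j'⟩ hu htu
    obtain ⟨rfl, -⟩ := Prod.mk.inj htu
    simp only [mem_coe, mem_outers_iff, YoungDiagram.mem_iff_lt_rowLen] at ht hu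
    simp only [Prod.mk.injEq, true_and]
    omega
  calc #(outers Y) ≤ #((addables Y).erase (0, Y.rowLen 0)) := card_le_card_of_injOn _ hmaps hinj
    _ < #(addables Y) := card_erase_lt_of_mem h0

def tauTransform (Y : YoungDiagram) (z : Kf) : Kf :=
  (∏ t ∈ outers Y, (z - content t)) / ∏ a ∈ addables Y, (z - content a)

lemma sum_tau_div_eq_tauTransform (Y : YoungDiagram) {z : Kf}
    (hz : ∀ a ∈ addables Y, z ≠ content a) :
    ∑ q ∈ addables Y, tau Y q / (z - content q) = tauTransform Y z := by
  open Lagrange Polynomial in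
  have hdeg : (nodal (outers Y) content).degree < #(addables Y) := by
    rw [degree_nodal]
    exact_mod_cast card_outers_lt_card_addables Y
  have h := congrArg (eval z) (eq_interpolate content_injective.injOn hdeg)
  rw [eval_interpolate_not_at_node _ hz, eval_nodal, eval_nodal] at h
  have hQ : ∏ a ∈ addables Y, (z - content a) ≠ 0 :=
    prod_ne_zero_iff.mpr fun a ha => sub_ne_zero_of_ne (hz a ha)
  rw [tauTransform, h, mul_div_cancel_left₀ _ hQ]
  refine sum_congr rfl fun q _ => ?_
  rw [tau, eval_nodal, nodalWeight, prod_inv_distrib]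
  ring

lemma sum_hbar_mul_tau_div (Y : YoungDiagram) {z : Kf} (hz : ∀ a ∈ addables Y, z ≠ content a)
    (hz' : ∀ a ∈ addables Y, z + eps1 + eps2 ≠ content a) :
    ∑ q ∈ addables Y, hbar * tau Y q / ((z - content q) * (z - content q + eps1 + eps2)) =
      hbar / (eps1 + eps2) * (tauTransform Y z - tauTransform Y (z + eps1 + eps2)) := by
  rw [← sum_tau_div_eq_tauTransform Y hz, ← sum_tau_div_eq_tauTransform Y hz',
    ← sum_sub_distrib, mul_sum]
  refine sum_congr rfl fun q hq => ?_
  have hzq := sub_ne_zero_of_ne (hz q hq)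
  have hzq' := sub_ne_zero_of_ne (hz' q hq)
  have he := eps1_add_eps2_ne_zero
  rw [show z - content q + eps1 + eps2 = z + eps1 + eps2 - content q by ring]
  field_simp
  ring

lemma tauTransform_content_of_mem_outers {Y : YoungDiagram} {t : ℕ × ℕ} (ht : t ∈ outers Y) :
    tauTransform Y (content t) = 0 := by
  rw [tauTransform, prod_eq_zero ht (sub_self _), zero_div]

section Removal

variable {Y Y' : YoungDiagram} {s : ℕ × ℕ}

lemma mem_iff_of_cells_eq_erase (hY' : Y'.cells = Y.cells.erase s) {c : ℕ × ℕ} :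
    c ∈ Y' ↔ c ≠ s ∧ c ∈ Y := by
  rw [← YoungDiagram.mem_cells, hY', mem_erase, YoungDiagram.mem_cells]

lemma addables_erase_of_removable (hs : s ∈ removables Y) (hY' : Y'.cells = Y.cells.erase s) :
    (addables Y').erase s = addables Y \ {(s.1 + 1, s.2), (s.1, s.2 + 1)} := by
  rw [mem_removables_iff] at hs
  ext ⟨i, j⟩
  obtain ⟨p, q⟩ := s
  simp only [mem_erase, mem_sdiff, mem_addables_iff, mem_iff_of_cells_eq_erase hY', mem_insert,
    mem_singleton, Prod.mk.injEq, ne_eq] at hs ⊢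
  grind

lemma prod_outers_of_removable {M : Type*} [CommMonoid M] (f : ℕ × ℕ → M)
    (hs : s ∈ removables Y) (hY' : Y'.cells = Y.cells.erase s) :
    ∏ t ∈ outers Y', f t = (∏ t ∈ (outers Y).erase (s.1 + 1, s.2 + 1), f t) *
      ∏ t ∈ {(s.1 + 1, s.2), (s.1, s.2 + 1)} \ addables Y, f t := by
  rw [mem_removables_iff] at hs
  have habove : 0 < s.1 → (s.1 - 1, s.2) ∈ Y := fun _ => Y.up_left_mem (by omega) le_rfl hs.1
  have hleft : 0 < s.2 → (s.1, s.2 - 1) ∈ Y := fun _ => Y.up_left_mem le_rfl (by omega) hs.1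
  rw [← prod_union]
  · congr 1
    ext ⟨i, j⟩
    obtain ⟨p, q⟩ := s
    simp only [mem_union, mem_erase, mem_sdiff, mem_addables_iff, mem_outers_iff,
      mem_iff_of_cells_eq_erase hY', mem_insert, mem_singleton, Prod.mk.injEq,
      ne_eq] at hs habove hleft ⊢
    grind
  · rw [disjoint_left]
    rintro ⟨i, j⟩ ht
    obtain ⟨p, q⟩ := s
    simp only [mem_erase, mem_sdiff, mem_addables_iff, mem_outers_iff, mem_insert,
      mem_singleton, Prod.mk.injEq, ne_eq] at hs ht ⊢
    grind

lemma tau_of_removable (hs : s ∈ removables Y) (hY' : Y'.cells = Y.cells.erase s) :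
    tau Y' s = hbar / (eps1 + eps2) * tauTransform Y (content s) := by
  have hsA := notMem_addables_of_mem (mem_removables_iff.mp hs).1
  have hne : ∀ B ⊆ addables Y, ∏ a ∈ B, (content s - content a) ≠ 0 := fun B hB =>
    prod_ne_zero_iff.mpr fun a ha =>
      sub_ne_zero_of_ne (content_injective.ne fun h => hsA (h ▸ hB ha))
  have hout : ∏ t ∈ outers Y, (content s - content t) =
      -(eps1 + eps2) * ∏ t ∈ (outers Y).erase (s.1 + 1, s.2 + 1), (content s - content t) := by
    rw [← mul_prod_erase (outers Y) _ (mem_image_of_mem _ hs), content_add_one]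
    ring
  rw [tau, tauTransform, prod_outers_of_removable _ hs hY', addables_erase_of_removable hs hY',
    hout, hbar]
  set E : Finset (ℕ × ℕ) := {(s.1 + 1, s.2), (s.1, s.2 + 1)}
  have hE : ∏ b ∈ E, (content s - content b) = eps1 * eps2 := by
    rw [prod_pair (by simp)]
    simp only [content]
    push_cast
    ring
  rw [← prod_inter_mul_prod_sdiff E (addables Y), inter_comm] at hE
  rw [← prod_inter_mul_prod_sdiff (addables Y) E]
  have hinter := hne _ (inter_subset_left (s₂ := E))
  have hsdiff := hne _ (sdiff_subset (t := E))
  have he := eps1_add_eps2_ne_zero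
  field_simp
  linear_combination (∏ t ∈ (outers Y).erase (s.1 + 1, s.2 + 1), (content s - content t)) * hE

end Removal

/-- for a partition `λ` and a removable box `s` of `λ` (i.e.
`s+(1,1) ∈ R⁺_λ`), one has
`Σ_{q ∈ A_λ} ℏ·τ_λ^q / ([s-q]·[s-q+(1,1)]) = τ_{λ-s}^s`, where `λ-s` is `λ` with the
box `s` removed (so that `s ∈ A_{λ-s}`). -/
theorem tau_sum_identity (Y Y' : YoungDiagram) (s : ℕ × ℕ)
    (hs : s ∈ removables Y) (hY' : Y'.cells = Y.cells.erase s) :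
    ∑ q ∈ addables Y,
        hbar * tau Y q /
          ((content s - content q) * (content s - content q + eps1 + eps2)) =
      tau Y' s := by
  have hsA := notMem_addables_of_mem (mem_removables_iff.mp hs).1
  have hcorner : (s.1 + 1, s.2 + 1) ∈ outers Y := mem_image_of_mem _ hs
  have hz : ∀ a ∈ addables Y, content s ≠ content a := fun a ha h =>
    hsA (content_injective h ▸ ha)
  have hz' : ∀ a ∈ addables Y, content s + eps1 + eps2 ≠ content a := fun a ha h => by
    rw [← content_add_one] at h
    exact disjoint_left.mp (disjoint_outers_addables Y) hcorner (content_injective h ▸ ha)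
  rw [sum_hbar_mul_tau_div Y hz hz', ← content_add_one, tauTransform_content_of_mem_outers hcorner,
    sub_zero, tau_of_removable hs hY']
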